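/- arXiv:1110.6014 — 2 statements merged into one kernel-verified Lean document; each statement's English description precedes it below -/
import Mathlib

section
/- Let u: ℂ → [0,1] be a Lebesgue measurable function, and let ρ(u) := lim_{R→∞} (1/(πR²)) · sup_{a∈ℂ} ∫_{D_R(a)} u dxdy (this limit exists). Then the limit lim_{R→∞} (1/R²) · sup_{a,b∈ℝ} ∫_{[a,a+R]×[b,b+R]} u dxdy also exists, and it equals ρ(u). -/
/-!
If `T - K ⊆ E`, averaging the mass of `u` on the translates `t + K` over `t ∈ E` (Tonelli) gives
`|K| ∫_T u ≤ |E| sup_t ∫_{t+K} u`, because every point of `T` is covered by a set of translates of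
measure `|K|`. Taking for `K` a disc of radius `r` and for `T` a square of side `R` (so that `E` is
a square of side `R + 2r`), and vice versa, bounds each normalised supremum by the other up to the
factor `(1 + 2r/R)²`. Letting the large scale tend to infinity at a fixed small scale shows that
`ρ` is at most every square density, and discs of radius `√R` in squares of side `R` give the
matching upper bound.
-/

open Filter MeasureTheory

/-- The closed square `[a, a+R] × [b, b+R]` inside `ℂ ≅ ℝ²`. -/
def closedSquare (a b R : ℝ) : Set ℂ :=
  {z : ℂ | z.re ∈ Set.Icc a (a + R) ∧ z.im ∈ Set.Icc b (b + R)}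

open Set Metric Topology
open scoped ENNReal Pointwise

section Averaging

variable {G : Type*} [AddCommGroup G] [MeasurableSpace G] [MeasurableAdd₂ G] [MeasurableNeg G]
  {μ : Measure G}

theorem measure_mul_setLIntegral_le_of_sub_subset [SFinite μ] [μ.IsAddLeftInvariant]
    [μ.IsNegInvariant] {K T E : Set G} (hK : MeasurableSet K) (hT : MeasurableSet T)
    (hTKE : T - K ⊆ E) {g : G → ℝ≥0∞} (hg : Measurable g) {M : ℝ≥0∞}
    (hM : ∀ t, ∫⁻ z in (· - t) ⁻¹' K, g z ∂μ ≤ M) :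
    μ K * ∫⁻ z in T, g z ∂μ ≤ μ E * M := by
  have hKz : ∀ z, MeasurableSet ((z - ·) ⁻¹' K) := fun z => measurable_const_sub z hK
  have hinner : ∀ z, ∫⁻ t in E, K.indicator 1 (z - t) * g z ∂μ
      = g z * μ.restrict E ((z - ·) ⁻¹' K) := by
    intro z
    have hind : Measurable fun t => K.indicator (1 : G → ℝ≥0∞) (z - t) :=
      (measurable_one.indicator hK).comp (measurable_const_sub z)
    rw [lintegral_mul_const _ hind, mul_comm, ← lintegral_indicator_one (hKz z)]
    rfl
  have houter : ∀ t, ∫⁻ z, K.indicator 1 (z - t) * g z ∂μ = ∫⁻ z in (· - t) ⁻¹' K, g z ∂μ := by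
    intro t
    rw [← lintegral_indicator (measurable_sub_const t hK)]
    congr 1 with z
    by_cases h : z - t ∈ K <;> simp [h]
  have hkernel : Measurable (Function.uncurry fun t z : G => K.indicator 1 (z - t) * g z) :=
    ((measurable_one.indicator hK).comp (measurable_snd.sub measurable_fst)).mul
      (hg.comp measurable_snd)
  calc μ K * ∫⁻ z in T, g z ∂μ
      = ∫⁻ z in T, g z * μ.restrict E ((z - ·) ⁻¹' K) ∂μ := by
        rw [mul_comm, ← lintegral_mul_const _ hg]
        refine setLIntegral_congr_fun hT fun z hz => ?_
        have hsub : (z - ·) ⁻¹' K ⊆ E := fun t ht => by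
          simpa using hTKE (Set.sub_mem_sub hz ht)
        rw [Measure.restrict_apply (hKz z), inter_eq_left.2 hsub,
          (μ.measurePreserving_sub_left z).measure_preimage hK.nullMeasurableSet]
    _ ≤ ∫⁻ z, ∫⁻ t in E, K.indicator 1 (z - t) * g z ∂μ ∂μ := by
        simp_rw [hinner]; exact setLIntegral_le_lintegral _ _
    _ = ∫⁻ t in E, ∫⁻ z in (· - t) ⁻¹' K, g z ∂μ ∂μ := by
        rw [← lintegral_lintegral_swap hkernel.aemeasurable]; simp_rw [houter]
    _ ≤ ∫⁻ _ in E, M ∂μ := lintegral_mono hM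
    _ = μ E * M := by rw [setLIntegral_const, mul_comm]

theorem measureReal_mul_setIntegral_le_of_sub_subset [SFinite μ] [μ.IsAddLeftInvariant]
    [μ.IsNegInvariant] {K T E : Set G} (hK : MeasurableSet K) (hT : MeasurableSet T)
    (hE : μ E ≠ ∞) (hTKE : T - K ⊆ E) {u : G → ℝ} (hu : Measurable u) (hu0 : ∀ z, 0 ≤ u z)
    (hint : ∀ t, IntegrableOn u ((· - t) ⁻¹' K) μ) {M : ℝ}
    (hM : ∀ t, ∫ z in (· - t) ⁻¹' K, u z ∂μ ≤ M) :
    μ.real K * ∫ z in T, u z ∂μ ≤ μ.real E * M := by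
  have hM0 : 0 ≤ M := (integral_nonneg hu0).trans (hM 0)
  have key := measure_mul_setLIntegral_le_of_sub_subset (μ := μ) hK hT hTKE
    (g := fun z => ENNReal.ofReal (u z)) (ENNReal.measurable_ofReal.comp hu)
    (M := ENNReal.ofReal M) fun t => by
      rw [← ofReal_integral_eq_lintegral_ofReal (hint t) (ae_of_all _ hu0)]
      exact ENNReal.ofReal_le_ofReal (hM t)
  have key' := ENNReal.toReal_mono (ENNReal.mul_ne_top hE ENNReal.ofReal_ne_top) key
  rwa [ENNReal.toReal_mul, ENNReal.toReal_mul, ENNReal.toReal_ofReal hM0,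
    ← integral_eq_lintegral_of_nonneg_ae (ae_of_all _ hu0) hu.aestronglyMeasurable] at key'

end Averaging

theorem setIntegral_le_measureReal {α : Type*} [MeasurableSpace α] {μ : Measure α}
    {u : α → ℝ} (hu01 : ∀ z, u z ∈ Icc 0 1) {S : Set α} (hS : μ S ≠ ∞) :
    ∫ z in S, u z ∂μ ≤ μ.real S := by
  have := norm_setIntegral_le_of_norm_le_const hS.lt_top (C := 1) fun z _ => by
    rw [Real.norm_of_nonneg (hu01 z).1]; exact (hu01 z).2
  exact (le_abs_self _).trans (by simpa using this)

theorem integrableOn_of_mem_Icc_zero_one {α : Type*} [MeasurableSpace α] {μ : Measure α}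
    {u : α → ℝ} (hu : Measurable u) (hu01 : ∀ z, u z ∈ Icc 0 1) {S : Set α} (hS : μ S ≠ ∞) :
    IntegrableOn u S μ :=
  IntegrableOn.of_bound hS.lt_top hu.aestronglyMeasurable 1 <| ae_of_all _ fun z => by
    rw [Real.norm_of_nonneg (hu01 z).1]; exact (hu01 z).2

section Squares

theorem measurableSet_closedSquare (a b R : ℝ) : MeasurableSet (closedSquare a b R) :=
  (Complex.measurable_re measurableSet_Icc).inter (Complex.measurable_im measurableSet_Icc)

theorem volume_closedSquare (a b R : ℝ) :
    volume (closedSquare a b R) = ENNReal.ofReal R ^ 2 := by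
  have : closedSquare a b R
      = Complex.measurableEquivRealProd ⁻¹' (Icc a (a + R) ×ˢ Icc b (b + R)) := rfl
  rw [this, Complex.volume_preserving_equiv_real_prod.measure_preimage
      (measurableSet_Icc.prod measurableSet_Icc).nullMeasurableSet,
    Measure.volume_eq_prod, Measure.prod_prod, Real.volume_Icc, Real.volume_Icc,
    add_sub_cancel_left, add_sub_cancel_left, sq]

theorem volume_real_closedSquare (a b : ℝ) {R : ℝ} (hR : 0 ≤ R) :
    volume.real (closedSquare a b R) = R ^ 2 := by
  simp [Measure.real, volume_closedSquare, hR]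

theorem volume_real_closedBall (a : ℂ) {r : ℝ} (hr : 0 ≤ r) :
    volume.real (closedBall a r) = Real.pi * r ^ 2 := by
  simp [Measure.real, hr, mul_comm]

theorem preimage_sub_closedSquare_zero (t : ℂ) (s : ℝ) :
    (· - t) ⁻¹' closedSquare 0 0 s = closedSquare t.re t.im s := by
  ext z
  simp only [closedSquare, mem_preimage, mem_ofPred_eq, mem_Icc, Complex.sub_re, Complex.sub_im]
  constructor <;> rintro ⟨⟨h₁, h₂⟩, h₃, h₄⟩ <;> refine ⟨⟨?_, ?_⟩, ?_, ?_⟩ <;> linarith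

theorem preimage_sub_closedBall_zero (t : ℂ) (r : ℝ) :
    (· - t) ⁻¹' closedBall 0 r = closedBall t r := by
  ext z
  simp [dist_eq_norm]

theorem closedSquare_sub_closedBall_zero_subset (a b R r : ℝ) :
    closedSquare a b R - closedBall 0 r ⊆ closedSquare (a - r) (b - r) (R + 2 * r) := by
  rw [Set.sub_subset_iff]
  rintro z ⟨⟨h₁, h₂⟩, h₃, h₄⟩ w hw
  rw [mem_closedBall_zero_iff] at hw
  have hre := abs_le.1 ((Complex.abs_re_le_norm w).trans hw)
  have him := abs_le.1 ((Complex.abs_im_le_norm w).trans hw)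
  simp only [closedSquare, mem_ofPred_eq, mem_Icc, Complex.sub_re, Complex.sub_im]
  refine ⟨⟨?_, ?_⟩, ?_, ?_⟩ <;> linarith

theorem closedBall_sub_closedSquare_zero_subset (a : ℂ) (L s : ℝ) :
    closedBall a L - closedSquare 0 0 s ⊆ closedBall a (L + 2 * s) := by
  rw [Set.sub_subset_iff]
  rintro z hz w ⟨⟨h₁, h₂⟩, h₃, h₄⟩
  rw [zero_add] at h₂ h₄
  have hw : ‖w‖ ≤ 2 * s := by
    refine (Complex.norm_le_abs_re_add_abs_im w).trans ?_
    rw [abs_of_nonneg h₁, abs_of_nonneg h₃]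
    linarith
  rw [mem_closedBall, dist_eq_norm] at hz ⊢
  calc ‖z - w - a‖ = ‖(z - a) - w‖ := by ring_nf
    _ ≤ ‖z - a‖ + ‖w‖ := norm_sub_le _ _
    _ ≤ L + 2 * s := by linarith

end Squares

section Densities

noncomputable def supDiscIntegral (u : ℂ → ℝ) (r : ℝ) : ℝ :=
  ⨆ a : ℂ, ∫ z in closedBall a r, u z

noncomputable def supSquareIntegral (u : ℂ → ℝ) (s : ℝ) : ℝ :=
  ⨆ p : ℝ × ℝ, ∫ z in closedSquare p.1 p.2 s, u z

variable {u : ℂ → ℝ} (hu : Measurable u) (hu01 : ∀ z, u z ∈ Icc 0 1)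
include hu01

theorem le_supDiscIntegral (a : ℂ) (r : ℝ) :
    ∫ z in closedBall a r, u z ≤ supDiscIntegral u r := by
  refine le_ciSup (f := fun a : ℂ => ∫ z in closedBall a r, u z)
    ⟨volume.real (closedBall (0 : ℂ) r), ?_⟩ a
  rintro _ ⟨b, rfl⟩
  refine (setIntegral_le_measureReal hu01 measure_closedBall_lt_top.ne).trans_eq ?_
  simp [Measure.real]

theorem le_supSquareIntegral (a b s : ℝ) :
    ∫ z in closedSquare a b s, u z ≤ supSquareIntegral u s := by
  refine le_ciSup (f := fun p : ℝ × ℝ => ∫ z in closedSquare p.1 p.2 s, u z)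
    ⟨volume.real (closedSquare 0 0 s), ?_⟩ (a, b)
  rintro _ ⟨p, rfl⟩
  refine (setIntegral_le_measureReal hu01 (by simp [volume_closedSquare])).trans_eq ?_
  simp [Measure.real, volume_closedSquare]

include hu

theorem mul_supSquareIntegral_le {R r : ℝ} (hR : 0 ≤ R) (hr : 0 ≤ r) :
    Real.pi * r ^ 2 * supSquareIntegral u R ≤ (R + 2 * r) ^ 2 * supDiscIntegral u r := by
  rw [supSquareIntegral, Real.mul_iSup_of_nonneg (by positivity)]
  refine ciSup_le fun p => ?_
  have h := measureReal_mul_setIntegral_le_of_sub_subset (μ := volume) measurableSet_closedBall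
    (measurableSet_closedSquare _ _ _) (by simp [volume_closedSquare])
    (closedSquare_sub_closedBall_zero_subset p.1 p.2 R r) hu (fun z => (hu01 z).1)
    (fun t => integrableOn_of_mem_Icc_zero_one hu hu01
      (by rw [preimage_sub_closedBall_zero]; exact measure_closedBall_lt_top.ne))
    (M := supDiscIntegral u r)
    (fun t => by rw [preimage_sub_closedBall_zero]; exact le_supDiscIntegral hu01 t r)
  rwa [volume_real_closedBall _ hr, volume_real_closedSquare _ _ (by positivity)] at h

theorem mul_supDiscIntegral_le {L s : ℝ} (hL : 0 ≤ L) (hs : 0 ≤ s) :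
    s ^ 2 * supDiscIntegral u L ≤ Real.pi * (L + 2 * s) ^ 2 * supSquareIntegral u s := by
  rw [supDiscIntegral, Real.mul_iSup_of_nonneg (by positivity)]
  refine ciSup_le fun a => ?_
  have h := measureReal_mul_setIntegral_le_of_sub_subset (μ := volume)
    (measurableSet_closedSquare 0 0 s) measurableSet_closedBall measure_closedBall_lt_top.ne
    (closedBall_sub_closedSquare_zero_subset a L s) hu (fun z => (hu01 z).1)
    (fun t => integrableOn_of_mem_Icc_zero_one hu hu01
      (by simp [preimage_sub_closedSquare_zero, volume_closedSquare]))
    (M := supSquareIntegral u s)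
    (fun t => by rw [preimage_sub_closedSquare_zero]; exact le_supSquareIntegral hu01 _ _ s)
  rwa [volume_real_closedBall _ (by positivity), volume_real_closedSquare _ _ hs] at h

end Densities

theorem tendsto_of_le_one_add_div_sq_mul {f g : ℝ → ℝ} {ρ c : ℝ} (hf : Tendsto f atTop (𝓝 ρ))
    (hfg : ∀ L s, 0 < L → 0 < s → f L ≤ (1 + c * s / L) ^ 2 * g s)
    (hgf : ∀ R r, 0 < R → 0 < r → g R ≤ (1 + c * r / R) ^ 2 * f r) :
    Tendsto g atTop (𝓝 ρ) := by
  have hlower : ∀ s, 0 < s → ρ ≤ g s := fun s hs => by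
    have hlim : Tendsto (fun L => (1 + c * s / L) ^ 2 * g s) atTop (𝓝 ((1 + 0) ^ 2 * g s)) :=
      (((tendsto_const_nhds.div_atTop tendsto_id).const_add 1).pow 2).mul_const _
    simpa using le_of_tendsto_of_tendsto hf hlim
      ((eventually_gt_atTop 0).mono fun L hL => hfg L s hL hs)
  -- compare squares of side `R` with discs of radius `√R`, so that `c * r / R → 0`
  have hupper : Tendsto (fun R => (1 + c * √R / R) ^ 2 * f √R) atTop (𝓝 ρ) := by
    have hcorr : Tendsto (fun R => c * √R / R) atTop (𝓝 0) := by
      refine ((tendsto_const_nhds (x := c)).div_atTop Real.tendsto_sqrt_atTop).congr'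
        ((eventually_gt_atTop 0).mono fun R hR => ?_)
      rw [div_eq_div_iff (Real.sqrt_pos.2 hR).ne' hR.ne', mul_assoc, Real.mul_self_sqrt hR.le]
    simpa using ((hcorr.const_add 1).pow 2).mul (hf.comp Real.tendsto_sqrt_atTop)
  exact tendsto_of_tendsto_of_tendsto_of_le_of_le' tendsto_const_nhds hupper
    ((eventually_gt_atTop 0).mono fun R hR => hlower R hR)
    ((eventually_gt_atTop 0).mono fun R hR => hgf R √R hR (Real.sqrt_pos.2 hR))

theorem one_div_mul_le_one_add_div_sq_mul {α β c x y A B : ℝ} (hα : 0 < α) (hβ : 0 < β)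
    (hx : 0 < x) (hy : 0 < y) (h : β * y ^ 2 * A ≤ α * (x + c * y) ^ 2 * B) :
    1 / (α * x ^ 2) * A ≤ (1 + c * y / x) ^ 2 * (1 / (β * y ^ 2) * B) := by
  calc 1 / (α * x ^ 2) * A = β * y ^ 2 * A / (α * β * x ^ 2 * y ^ 2) := by
        field_simp
    _ ≤ α * (x + c * y) ^ 2 * B / (α * β * x ^ 2 * y ^ 2) := by gcongr
    _ = (1 + c * y / x) ^ 2 * (1 / (β * y ^ 2) * B) := by
        field_simp

theorem stmt_6 (u : ℂ → ℝ) (hu : Measurable u) (hu01 : ∀ z : ℂ, u z ∈ Set.Icc (0:ℝ) 1)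
    (ρ : ℝ)
    (hρ : Tendsto
      (fun R : ℝ =>
        (1 / (Real.pi * R ^ 2)) * ⨆ a : ℂ, ∫ z in Metric.closedBall a R, u z)
      atTop (nhds ρ)) :
    Tendsto
      (fun R : ℝ =>
        (1 / R ^ 2) * ⨆ p : ℝ × ℝ, ∫ z in closedSquare p.1 p.2 R, u z)
      atTop (nhds ρ) := by
  change Tendsto (fun R => 1 / (Real.pi * R ^ 2) * supDiscIntegral u R) atTop (𝓝 ρ) at hρ
  change Tendsto (fun R => 1 / R ^ 2 * supSquareIntegral u R) atTop (𝓝 ρ)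
  refine tendsto_of_le_one_add_div_sq_mul (c := 2) hρ (fun L s hL hs => ?_) (fun R r hR hr => ?_)
  · have h := mul_supDiscIntegral_le hu hu01 hL.le hs.le
    simpa only [one_mul] using one_div_mul_le_one_add_div_sq_mul (β := 1) Real.pi_pos one_pos
      hL hs (by simpa only [one_mul] using h)
  · have h := mul_supSquareIntegral_le hu hu01 hR.le hr.le
    simpa only [one_mul] using one_div_mul_le_one_add_div_sq_mul (α := 1) one_pos Real.pi_pos
      hR hr (by simpa only [one_mul] using h)
end

section
/- Let N ≥ 1 and let f₁, …, f_N be holomorphic functions on an open set U ⊆ ℂ. Then for every z ∈ U, Δ_z log(1 + Σ_{i=1}^N |f_i(z)|²) = 4 · (Σ_{i=1}^N |f_i'(z)|² + Σ_{1≤i<j≤N} |f_i'(z)f_j(z) − f_i(z)f_j'(z)|²) / (1 + Σ_{i=1}^N |f_i(z)|²)². Consequently, the spherical derivative |df|²(z) := (1/(4π)) Δ_z log(1 + Σ_i |f_i(z)|²) of the holomorphic curve f = [1 : f₁ : ⋯ : f_N] satisfies |df|(z) = sqrt(Σ_i |f_i'(z)|² + Σ_{i<j} |f_i'(z)f_j(z)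 − f_i(z)f_j'(z)|²) / (√π (1 + Σ_i |f_i(z)|²)). -/
open Filter

/-- The Laplacian `∂²φ/∂x² + ∂²φ/∂y²` of a function `φ : ℂ → ℝ`,
identifying `ℂ` with `ℝ²` via `z = x + iy`. -/
noncomputable def laplacian (φ : ℂ → ℝ) (z : ℂ) : ℝ :=
  iteratedFDeriv ℝ 2 φ z ![1, 1] + iteratedFDeriv ℝ 2 φ z ![Complex.I, Complex.I]

/-- The spherical derivative of the holomorphic curve `[1 : f₁ : ⋯ : f_N]`. -/
noncomputable def sphericalDeriv {N : ℕ} (f : Fin N → ℂ → ℂ) (z : ℂ) : ℝ :=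
  Real.sqrt (∑ i, ‖deriv (f i) z‖ ^ 2 +
      ∑ p ∈ Finset.univ.filter (fun p : Fin N × Fin N => p.1 < p.2),
        ‖deriv (f p.1) z * f p.2 z - f p.1 z * deriv (f p.2) z‖ ^ 2) /
    (Real.sqrt Real.pi * (1 + ∑ i, ‖f i z‖ ^ 2))


/-! With `S = 1 + ∑ i, ‖f i‖ ^ 2`, the chain rule for `log` gives
`Δ (log S) = Δ S / S - ‖∇S‖² / S²`. Since each `f i` is holomorphic, `Δ ‖f i‖² = 4 ‖f i'‖²`, and
the real differential of `S` is `v ↦ 2 re (G v)` with `G = ∑ i, conj (f i) * f i'`, so that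
`‖∇S‖² = 4 ‖G‖²`. Hence `Δ (log S) = 4 (S ∑ ‖f i'‖² - ‖G‖²) / S²`, and Lagrange's identity
`(∑ ‖f i‖²)(∑ ‖f i'‖²) - ‖G‖² = ∑_{i<j} ‖f i' f j - f i f j'‖²` gives the numerator. -/

open Topology ComplexConjugate

theorem Finset.two_nsmul_sum_filter_fst_lt {ι M : Type*} [Fintype ι] [LinearOrder ι]
    [AddCommMonoid M] (g : ι × ι → M) (hswap : ∀ p, g p.swap = g p) (hdiag : ∀ i, g (i, i) = 0) :
    2 • ∑ p ∈ univ.filter (fun p : ι × ι => p.1 < p.2), g p = ∑ p, g p := by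
  have hgt : ∑ p ∈ univ.filter (fun p : ι × ι => p.2 < p.1), g p =
      ∑ p ∈ univ.filter (fun p : ι × ι => p.1 < p.2), g p :=
    sum_equiv (Equiv.prodComm ι ι) (by simp) (fun p _ => (hswap p).symm)
  have hnot_lt : ∑ p ∈ univ.filter (fun p : ι × ι => ¬ p.1 < p.2), g p =
      ∑ p ∈ univ.filter (fun p : ι × ι => p.2 < p.1), g p := by
    rw [sum_filter, sum_filter]
    refine sum_congr rfl fun ⟨i, j⟩ _ => ?_
    rcases lt_trichotomy i j with h | rfl | h
    · simp [h, h.not_gt]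
    · simp [hdiag]
    · simp [h, h.not_gt]
  rw [← sum_filter_add_sum_filter_not univ (fun p : ι × ι => p.1 < p.2), hnot_lt, hgt, two_nsmul]

theorem RCLike.sum_norm_sq_mul_sub_mul {𝕜 ι : Type*} [RCLike 𝕜] [Fintype ι] (a b : ι → 𝕜) :
    ∑ p : ι × ι, ‖b p.1 * a p.2 - a p.1 * b p.2‖ ^ 2 =
      2 * ((∑ i, ‖a i‖ ^ 2) * (∑ i, ‖b i‖ ^ 2) - ‖∑ i, conj (a i) * b i‖ ^ 2) := by
  have hexpand (p : ι × ι) : ((‖b p.1 * a p.2 - a p.1 * b p.2‖ ^ 2 : ℝ) : 𝕜) =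
      b p.1 * conj (b p.1) * (a p.2 * conj (a p.2)) + a p.1 * conj (a p.1) * (b p.2 * conj (b p.2))
        - conj (a p.1) * b p.1 * (a p.2 * conj (b p.2))
        - a p.1 * conj (b p.1) * (conj (a p.2) * b p.2) := by
    rw [RCLike.ofReal_pow, ← RCLike.mul_conj]
    simp only [map_sub, map_mul]
    ring
  apply RCLike.ofReal_injective (K := 𝕜)
  rw [RCLike.ofReal_sum]
  simp only [hexpand]
  push_cast [← RCLike.mul_conj]
  simp only [Fintype.sum_prod_type, Finset.sum_sub_distrib, Finset.sum_add_distrib,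
    ← Finset.sum_mul, ← Finset.mul_sum, map_sum, map_mul, RCLike.conj_conj]
  ring

-- Lagrange's identity
theorem RCLike.sum_filter_lt_norm_sq_mul_sub_mul {𝕜 ι : Type*} [RCLike 𝕜] [Fintype ι]
    [LinearOrder ι] (a b : ι → 𝕜) :
    ∑ p ∈ Finset.univ.filter (fun p : ι × ι => p.1 < p.2), ‖b p.1 * a p.2 - a p.1 * b p.2‖ ^ 2 =
      (∑ i, ‖a i‖ ^ 2) * (∑ i, ‖b i‖ ^ 2) - ‖∑ i, conj (a i) * b i‖ ^ 2 := by
  have h := Finset.two_nsmul_sum_filter_fst_lt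
    (fun p : ι × ι => ‖b p.1 * a p.2 - a p.1 * b p.2‖ ^ 2)
    (fun p => by
      rw [Prod.fst_swap, Prod.snd_swap, ← norm_neg, neg_sub, mul_comm (a p.2), mul_comm (b p.2)])
    (fun i => by simp [mul_comm])
  rw [RCLike.sum_norm_sq_mul_sub_mul, two_nsmul, ← two_mul] at h
  linarith

section SecondDerivative

variable {𝕜 E F : Type*} [NontriviallyNormedField 𝕜] [NormedAddCommGroup E] [NormedSpace 𝕜 E]
  [NormedAddCommGroup F] [NormedSpace 𝕜 F] {φ : E → F} {z : E}

theorem ContDiffAt.iteratedFDeriv_two_apply_eq_fderiv_apply (hφ : ContDiffAt 𝕜 2 φ z) (u v : E) :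
    iteratedFDeriv 𝕜 2 φ z ![u, v] = fderiv 𝕜 (fun w => fderiv 𝕜 φ w v) z u := by
  have hdiff : DifferentiableAt 𝕜 (fderiv 𝕜 φ) z :=
    (hφ.fderiv_right (m := 1) le_rfl).differentiableAt one_ne_zero
  rw [iteratedFDeriv_two_apply, fderiv_clm_apply hdiff (differentiableAt_const v)]
  simp

theorem ContDiffAt.differentiableAt_fderiv_apply (hφ : ContDiffAt 𝕜 2 φ z) (v : E) :
    DifferentiableAt 𝕜 (fun w => fderiv 𝕜 φ w v) z :=
  ((hφ.fderiv_right (m := 1) le_rfl).differentiableAt one_ne_zero).clm_apply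
    (differentiableAt_const v)

theorem ContDiffAt.eventually_hasFDerivAt (hφ : ContDiffAt 𝕜 2 φ z) :
    ∀ᶠ w in 𝓝 z, HasFDerivAt φ (fderiv 𝕜 φ w) w :=
  (hφ.eventually (by simp)).mono fun _ hw => (hw.differentiableAt two_ne_zero).hasFDerivAt

end SecondDerivative

section RealSecondDerivative

variable {E F : Type*} [NormedAddCommGroup E] [NormedSpace ℝ E] [NormedAddCommGroup F]
  [InnerProductSpace ℝ F] {z : E}

theorem iteratedFDeriv_two_log_apply {S : E → ℝ} (hS : ContDiffAt ℝ 2 S z) (hz : S z ≠ 0)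
    (u v : E) :
    iteratedFDeriv ℝ 2 (fun w => Real.log (S w)) z ![u, v] =
      iteratedFDeriv ℝ 2 S z ![u, v] / S z - fderiv ℝ S z u * fderiv ℝ S z v / S z ^ 2 := by
  have hfderiv : (fun w => fderiv ℝ (fun w => Real.log (S w)) w v) =ᶠ[𝓝 z]
      fun w => (S w)⁻¹ * fderiv ℝ S w v := by
    filter_upwards [hS.eventually_hasFDerivAt, hS.continuousAt.eventually_ne hz] with w hw hw0
    simp [(hw.log hw0).fderiv]
  have hinv : HasFDerivAt (fun w => (S w)⁻¹) _ z :=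
    (hasDerivAt_inv hz).comp_hasFDerivAt z (hS.differentiableAt two_ne_zero).hasFDerivAt
  rw [(hS.log hz).iteratedFDeriv_two_apply_eq_fderiv_apply, hfderiv.fderiv_eq,
    (hinv.fun_mul (hS.differentiableAt_fderiv_apply v).hasFDerivAt).fderiv,
    hS.iteratedFDeriv_two_apply_eq_fderiv_apply]
  simp only [add_apply, smul_apply, smul_eq_mul]
  field_simp
  ring

theorem iteratedFDeriv_two_norm_sq_apply {g : E → F} (hg : ContDiffAt ℝ 2 g z) (u v : E) :
    iteratedFDeriv ℝ 2 (fun w => ‖g w‖ ^ 2) z ![u, v] =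
      2 * (inner ℝ (fderiv ℝ g z u) (fderiv ℝ g z v) +
        inner ℝ (g z) (iteratedFDeriv ℝ 2 g z ![u, v])) := by
  have hfderiv : (fun w => fderiv ℝ (fun w => ‖g w‖ ^ 2) w v) =ᶠ[𝓝 z]
      fun w => 2 * inner ℝ (g w) (fderiv ℝ g w v) := by
    filter_upwards [hg.eventually_hasFDerivAt] with w hw
    simp [hw.norm_sq.fderiv]
  have hψ := ((hg.differentiableAt two_ne_zero).hasFDerivAt.inner ℝ
    (hg.differentiableAt_fderiv_apply v).hasFDerivAt).const_mul 2
  rw [(hg.norm_sq ℝ).iteratedFDeriv_two_apply_eq_fderiv_apply, hfderiv.fderiv_eq, hψ.fderiv,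
    hg.iteratedFDeriv_two_apply_eq_fderiv_apply]
  simp only [smul_apply, ContinuousLinearMap.comp_apply, ContinuousLinearMap.prod_apply,
    fderivInnerCLM_apply, smul_eq_mul]
  ring

end RealSecondDerivative

section Holomorphic

variable {g : ℂ → ℂ} {z : ℂ}

theorem DifferentiableAt.fderiv_real_apply (hg : DifferentiableAt ℂ g z) (v : ℂ) :
    fderiv ℝ g z v = deriv g z * v := by
  simp [hg.hasDerivAt.complexToReal_fderiv.fderiv]

theorem DifferentiableAt.fderiv_norm_sq_apply (hg : DifferentiableAt ℂ g z) (v : ℂ) :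
    fderiv ℝ (fun w => ‖g w‖ ^ 2) z v = 2 * (conj (g z) * deriv g z * v).re := by
  simp only [hg.hasDerivAt.complexToReal_fderiv.norm_sq.fderiv, smul_apply,
    ContinuousLinearMap.comp_apply, one_apply_eq_self, smul_eq_mul, coe_innerSL_apply,
    Complex.inner, nsmul_eq_mul, Nat.cast_ofNat]
  ring_nf

theorem AnalyticAt.iteratedFDeriv_two_real_apply (hg : AnalyticAt ℂ g z) (u v : ℂ) :
    iteratedFDeriv ℝ 2 g z ![u, v] = deriv (deriv g) z * (u * v) := by
  have hfderiv : (fun w => fderiv ℝ g w v) =ᶠ[𝓝 z] fun w => deriv g w * v := by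
    filter_upwards [hg.eventually_analyticAt] with w hw
    exact hw.differentiableAt.fderiv_real_apply v
  rw [(hg.contDiffAt.restrict_scalars ℝ).iteratedFDeriv_two_apply_eq_fderiv_apply,
    hfderiv.fderiv_eq,
    (hg.deriv.differentiableAt.hasDerivAt.complexToReal_fderiv.mul_const v).fderiv]
  simp only [smul_apply, one_apply_eq_self, smul_eq_mul]
  ring

theorem AnalyticAt.laplacian_norm_sq (hg : AnalyticAt ℂ g z) :
    laplacian (fun w => ‖g w‖ ^ 2) z = 4 * ‖deriv g z‖ ^ 2 := by
  have hg₂ : ContDiffAt ℝ 2 g z := hg.contDiffAt.restrict_scalars ℝ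
  rw [laplacian, iteratedFDeriv_two_norm_sq_apply hg₂, iteratedFDeriv_two_norm_sq_apply hg₂,
    hg.iteratedFDeriv_two_real_apply, hg.iteratedFDeriv_two_real_apply,
    hg.differentiableAt.fderiv_real_apply, hg.differentiableAt.fderiv_real_apply]
  -- the terms with `deriv (deriv g)` cancel because `1 * 1 + I * I = 0`
  simp only [mul_one, Complex.I_mul_I, mul_neg, inner_neg_right, real_inner_self_eq_norm_sq,
    norm_mul, Complex.norm_I]
  ring

end Holomorphic

theorem laplacian_log {S : ℂ → ℝ} {z : ℂ} (hS : ContDiffAt ℝ 2 S z) (hz : S z ≠ 0) :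
    laplacian (fun w => Real.log (S w)) z =
      laplacian S z / S z - (fderiv ℝ S z 1 ^ 2 + fderiv ℝ S z Complex.I ^ 2) / S z ^ 2 := by
  rw [laplacian, laplacian, iteratedFDeriv_two_log_apply hS hz, iteratedFDeriv_two_log_apply hS hz]
  ring

theorem laplacian_const_add_sum {ι : Type*} {s : Finset ι} {φ : ι → ℂ → ℝ} {z : ℂ} (c : ℝ)
    (hφ : ∀ i ∈ s, ContDiffAt ℝ 2 (φ i) z) :
    laplacian (fun w => c + ∑ i ∈ s, φ i w) z = ∑ i ∈ s, laplacian (φ i) z := by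
  have hsum : iteratedFDeriv ℝ 2 (fun w => c + ∑ i ∈ s, φ i w) z =
      ∑ i ∈ s, iteratedFDeriv ℝ 2 (φ i) z := by
    rw [fun_iteratedFDeriv_add_apply contDiffAt_const (ContDiffAt.sum hφ),
      iteratedFDeriv_const_of_ne two_ne_zero, iteratedFDeriv_fun_sum_apply hφ, Pi.zero_apply,
      zero_add]
  simp only [laplacian, hsum, sum_apply, Finset.sum_add_distrib]

theorem laplacian_log_one_add_sum_norm_sq {ι : Type*} [Fintype ι] {f : ι → ℂ → ℂ} {z : ℂ}
    (hf : ∀ i, AnalyticAt ℂ (f i) z) :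
    laplacian (fun w => Real.log (1 + ∑ i, ‖f i w‖ ^ 2)) z =
      4 * ((∑ i, ‖deriv (f i) z‖ ^ 2) * (1 + ∑ i, ‖f i z‖ ^ 2) -
          ‖∑ i, conj (f i z) * deriv (f i) z‖ ^ 2) / (1 + ∑ i, ‖f i z‖ ^ 2) ^ 2 := by
  have hnorm_sq : ∀ i ∈ Finset.univ, ContDiffAt ℝ 2 (fun w => ‖f i w‖ ^ 2) z :=
    fun i _ => ((hf i).contDiffAt.restrict_scalars ℝ).norm_sq ℝ
  have hS : ContDiffAt ℝ 2 (fun w => 1 + ∑ i, ‖f i w‖ ^ 2) z :=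
    contDiffAt_const.add (ContDiffAt.sum hnorm_sq)
  have hΔS : laplacian (fun w => 1 + ∑ i, ‖f i w‖ ^ 2) z = 4 * ∑ i, ‖deriv (f i) z‖ ^ 2 := by
    simp only [laplacian_const_add_sum 1 hnorm_sq, (hf _).laplacian_norm_sq, Finset.mul_sum]
  have hDS (v : ℂ) : fderiv ℝ (fun w => 1 + ∑ i, ‖f i w‖ ^ 2) z v =
      2 * ((∑ i, conj (f i z) * deriv (f i) z) * v).re := by
    rw [fderiv_const_add,
      fderiv_fun_sum fun i hi => (hnorm_sq i hi).differentiableAt two_ne_zero]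
    simp only [sum_apply, (hf _).differentiableAt.fderiv_norm_sq_apply, Finset.sum_mul,
      Complex.re_sum, Finset.mul_sum]
  have hSpos : 0 < 1 + ∑ i, ‖f i z‖ ^ 2 := by positivity
  rw [laplacian_log hS hSpos.ne', hΔS, hDS, hDS, mul_one, Complex.mul_I_re, Complex.sq_norm,
    Complex.normSq_apply]
  field_simp
  ring

theorem stmt_10_general (N : ℕ) (U : Set ℂ) (hU : IsOpen U)
    (f : Fin N → ℂ → ℂ) (hf : ∀ i, DifferentiableOn ℂ (f i) U) :
    ∀ z ∈ U,
      laplacian (fun w => Real.log (1 + ∑ i, ‖f i w‖ ^ 2)) z =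
        4 * (∑ i, ‖deriv (f i) z‖ ^ 2 +
            ∑ p ∈ Finset.univ.filter (fun p : Fin N × Fin N => p.1 < p.2),
              ‖deriv (f p.1) z * f p.2 z - f p.1 z * deriv (f p.2) z‖ ^ 2) /
          (1 + ∑ i, ‖f i z‖ ^ 2) ^ 2 ∧
      Real.sqrt ((1 / (4 * Real.pi)) *
          laplacian (fun w => Real.log (1 + ∑ i, ‖f i w‖ ^ 2)) z) =
        sphericalDeriv f z := by
  intro z hz
  have hΔ := laplacian_log_one_add_sum_norm_sq fun i => (hf i).analyticAt (hU.mem_nhds hz)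
  rw [mul_comm _ (1 + _), one_add_mul, add_sub_assoc,
    ← RCLike.sum_filter_lt_norm_sq_mul_sub_mul] at hΔ
  refine ⟨hΔ, ?_⟩
  have hrescale (T S : ℝ) : 1 / (4 * Real.pi) * (4 * T / S ^ 2) = T / (Real.pi * S ^ 2) := by
    ring
  rw [hΔ, hrescale, Real.sqrt_div' _ (by positivity), Real.sqrt_mul' _ (sq_nonneg _),
    Real.sqrt_sq (by positivity), sphericalDeriv]

theorem stmt_10 (N : ℕ) (hN : 1 ≤ N) (U : Set ℂ) (hU : IsOpen U)
    (f : Fin N → ℂ → ℂ) (hf : ∀ i, DifferentiableOn ℂ (f i) U) :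
    ∀ z ∈ U,
      laplacian (fun w => Real.log (1 + ∑ i, ‖f i w‖ ^ 2)) z =
        4 * (∑ i, ‖deriv (f i) z‖ ^ 2 +
            ∑ p ∈ Finset.univ.filter (fun p : Fin N × Fin N => p.1 < p.2),
              ‖deriv (f p.1) z * f p.2 z - f p.1 z * deriv (f p.2) z‖ ^ 2) /
          (1 + ∑ i, ‖f i z‖ ^ 2) ^ 2 ∧
      Real.sqrt ((1 / (4 * Real.pi)) *
          laplacian (fun w => Real.log (1 + ∑ i, ‖f i w‖ ^ 2)) z) =
        sphericalDeriv f z :=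
  stmt_10_general N U hU f hf
end
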